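/- If A ∈ C^{m×n} has full rank (rank A = min(m,n)), then J(X) = (1/2)‖(X−A)A†‖_F² + (1/2)‖A†(X−A)‖_F² is strictly convex in X on C^{m×n}. -/

import Mathlib

open Matrix

/-- The four Penrose conditions characterizing the Moore-Penrose pseudoinverse. -/
def IsMoorePenrose {m n : Type*} [Fintype m] [Fintype n]
    (A : Matrix m n ℂ) (B : Matrix n m ℂ) : Prop :=
  A * B * A = A ∧ B * A * B = B ∧ (A * B)ᴴ = A * B ∧ (B * A)ᴴ = B * A

/-- The Frobenius norm of a complex matrix. -/
noncomputable def frob {m n : Type*} [Fintype m] [Fintype n] (M : Matrix m n ℂ) : ℝ :=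
  Real.sqrt (∑ i, ∑ j, ‖M i j‖ ^ 2)

/-- The misfit functional J(X) = (1/2)‖(X−A)A†‖_F² + (1/2)‖A†(X−A)‖_F². -/
noncomputable def Jfun {m n : Type*} [Fintype m] [Fintype n]
    (A : Matrix m n ℂ) (Ad : Matrix n m ℂ) (X : Matrix m n ℂ) : ℝ :=
  (1 / 2) * frob ((X - A) * Ad) ^ 2 + (1 / 2) * frob (Ad * (X - A)) ^ 2

/-!
If `rank A = m`, the idempotent `A A†` has full rank, so `A A† = 1`; then `Z ↦ A† Z` is
injective and, `‖·‖_F²` being strictly convex (it is the squared norm of a Euclidean space),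
the summand `½‖A†(X − A)‖_F²` of `J` is strictly convex while the other one is convex.
If `rank A = n`, symmetrically `A† A = 1` and the roles of the two summands are exchanged.
-/

open Set Function

theorem StrictConvexOn.comp_affineMap {𝕜 E F β : Type*} [Ring 𝕜] [PartialOrder 𝕜]
    [AddCommGroup E] [AddCommGroup F] [AddCommMonoid β] [PartialOrder β] [Module 𝕜 E]
    [Module 𝕜 F] [SMul 𝕜 β] {f : F → β} (g : E →ᵃ[𝕜] F) (hg : Injective g) {s : Set F}
    (hf : StrictConvexOn 𝕜 s f) : StrictConvexOn 𝕜 (g ⁻¹' s) (f ∘ g) :=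
  ⟨hf.1.affine_preimage _, fun x hx y hy hxy a b ha hb hab =>
    calc
      (f ∘ g) (a • x + b • y) = f (a • g x + b • g y) := by
        rw [Function.comp_apply, Convex.combo_affine_apply hab]
      _ < a • f (g x) + b • f (g y) := hf.2 hx hy (hg.ne hxy) ha hb hab⟩

theorem strictConvexOn_half_norm_sq {E : Type*} [NormedAddCommGroup E]
    [InnerProductSpace ℝ E] : StrictConvexOn ℝ univ fun x : E ↦ 1 / 2 * ‖x‖ ^ 2 :=
  (strongConvexOn_iff_convex.mpr (by simpa using convexOn_const (0 : ℝ) convex_univ)).strictConvexOn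
    one_pos

namespace Matrix

theorem eq_one_of_isIdempotentElem_of_rank_eq_card {p K : Type*} [Fintype p] [DecidableEq p]
    [Field K] {P : Matrix p p K} (hP : IsIdempotentElem P) (hr : P.rank = Fintype.card p) :
    P = 1 := by
  have hrange : LinearMap.range P.mulVecLin = ⊤ :=
    Submodule.eq_top_of_finrank_eq <| by
      rw [← Matrix.rank, hr, Module.finrank_fintype_fun_eq_card]
  exact (IsIdempotentElem.iff_eq_one_of_isUnit
    (mulVec_surjective_iff_isUnit.mp (LinearMap.range_eq_top.mp hrange))).mp hP

variable {m n K : Type*} [Fintype m] [Fintype n] [Field K] {A : Matrix m n K} {B : Matrix n m K}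

theorem mul_eq_one_of_mul_mul_eq_self_of_rank_eq_card_rows [DecidableEq m] (hA : A * B * A = A)
    (hr : A.rank = Fintype.card m) : A * B = 1 := by
  refine eq_one_of_isIdempotentElem_of_rank_eq_card ?_ (le_antisymm (rank_le_card_width _) ?_)
  · rw [IsIdempotentElem, ← Matrix.mul_assoc, hA]
  · calc Fintype.card m = (A * B * A).rank := by rw [hA, hr]
      _ ≤ (A * B).rank := rank_mul_le_left _ _

theorem mul_eq_one_of_mul_mul_eq_self_of_rank_eq_card_cols [DecidableEq n] (hA : A * B * A = A)
    (hr : A.rank = Fintype.card n) : B * A = 1 := by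
  refine eq_one_of_isIdempotentElem_of_rank_eq_card ?_ (le_antisymm (rank_le_card_width _) ?_)
  · rw [IsIdempotentElem, Matrix.mul_assoc, ← Matrix.mul_assoc A, hA]
  · calc Fintype.card n = (A * (B * A)).rank := by rw [← Matrix.mul_assoc, hA, hr]
      _ ≤ (B * A).rank := rank_mul_le_right _ _

end Matrix

section Frobenius

variable {E p q : Type*} [AddCommGroup E] [Module ℝ E]

def frobEuclidean : Matrix p q ℂ →ₗ[ℝ] EuclideanSpace ℂ (p × q) where
  toFun M := WithLp.toLp 2 fun ij ↦ M ij.1 ij.2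
  map_add' _ _ := rfl
  map_smul' _ _ := rfl

theorem frobEuclidean_injective : Injective (frobEuclidean : Matrix p q ℂ →ₗ[ℝ] _) :=
  fun _ _ h ↦ ext fun i j ↦ congrFun (congrArg WithLp.ofLp h) (i, j)

variable [Fintype p] [Fintype q]

theorem norm_frobEuclidean (M : Matrix p q ℂ) : ‖frobEuclidean M‖ = frob M := by
  rw [EuclideanSpace.norm_eq, Fintype.sum_prod_type]
  rfl

noncomputable def frobEuclideanSubAffine (L : E →ₗ[ℝ] Matrix p q ℂ) (c : E) :
    E →ᵃ[ℝ] EuclideanSpace ℂ (p × q) :=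
  AffineMap.mk' (fun x ↦ frobEuclidean (L (x - c))) (frobEuclidean ∘ₗ L) c fun x ↦ by simp

theorem half_norm_sq_frobEuclideanSubAffine (L : E →ₗ[ℝ] Matrix p q ℂ) (c x : E) :
    ((fun v ↦ 1 / 2 * ‖v‖ ^ 2) ∘ frobEuclideanSubAffine L c) x =
      1 / 2 * frob (L (x - c)) ^ 2 := by
  rw [Function.comp_apply, frobEuclideanSubAffine, AffineMap.coe_mk', norm_frobEuclidean]

theorem convexOn_half_frob_sq_comp_sub (L : E →ₗ[ℝ] Matrix p q ℂ) (c : E) :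
    ConvexOn ℝ univ fun x ↦ 1 / 2 * frob (L (x - c)) ^ 2 :=
  (strictConvexOn_half_norm_sq.convexOn.comp_affineMap (frobEuclideanSubAffine L c)).congr
    fun x _ ↦ half_norm_sq_frobEuclideanSubAffine L c x

theorem strictConvexOn_half_frob_sq_comp_sub {L : E →ₗ[ℝ] Matrix p q ℂ} (hL : Injective L)
    (c : E) : StrictConvexOn ℝ univ fun x ↦ 1 / 2 * frob (L (x - c)) ^ 2 :=
  (strictConvexOn_half_norm_sq.comp_affineMap (frobEuclideanSubAffine L c)
    fun _ _ h ↦ sub_left_injective (hL (frobEuclidean_injective h))).congr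
    fun x _ ↦ half_norm_sq_frobEuclideanSubAffine L c x

end Frobenius

/-- if A has full rank, J is strictly convex on C^{m×n}. -/
theorem J_strictConvex {m n : Type*} [Fintype m] [Fintype n]
    (A : Matrix m n ℂ) (Ad : Matrix n m ℂ) (hAd : IsMoorePenrose A Ad)
    (hrank : A.rank = min (Fintype.card m) (Fintype.card n)) :
    StrictConvexOn ℝ (Set.univ : Set (Matrix m n ℂ)) (Jfun A Ad) := by
  classical
  obtain ⟨hAAdA, -⟩ := hAd
  have hJ : Jfun A Ad = (fun X ↦ 1 / 2 * frob (mulRightLinearMap m ℝ Ad (X - A)) ^ 2) +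
      fun X ↦ 1 / 2 * frob (mulLeftLinearMap n ℝ Ad (X - A)) ^ 2 := rfl
  rw [hJ]
  rcases le_total (Fintype.card m) (Fintype.card n) with h | h
  · have hAAd : A * Ad = 1 :=
      mul_eq_one_of_mul_mul_eq_self_of_rank_eq_card_rows hAAdA (hrank.trans (min_eq_left h))
    exact (convexOn_half_frob_sq_comp_sub _ A).add_strictConvexOn
      (strictConvexOn_half_frob_sq_comp_sub (mul_right_injective_of_inv A Ad hAAd) A)
  · have hAdA : Ad * A = 1 :=
      mul_eq_one_of_mul_mul_eq_self_of_rank_eq_card_cols hAAdA (hrank.trans (min_eq_right h))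
    exact (strictConvexOn_half_frob_sq_comp_sub (mul_left_injective_of_inv Ad A hAdA)
      A).add_convexOn (convexOn_half_frob_sq_comp_sub _ A)
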